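/- Let G be a graph, w : V → ℝ≥0 vertex weights, and τ ≥ 1. Suppose I_ALG is a maximal independent set of G such that every vertex v not in I_ALG has a neighbor v' ∈ I_ALG with w(v') ≥ w(v), and suppose every vertex of I_ALG has at most τ pairwise non-adjacent neighbors. Then for every independent set I of G, w(I) ≤ τ · w(I_ALG). -/

import Mathlib

/-!
Charge each vertex to itself if it lies in `IALG`, and otherwise to a neighbour in `IALG` of at
least its weight. The vertices of an independent set `I` charged to `v' ∈ IALG` are either `v'`
alone or pairwise non-adjacent neighbours of `v'`; so there are at most `τ` of them, each of
weight at most `w v'`.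
-/

open Finset

theorem Finset.sum_le_nsmul_sum_of_card_fiber_le {ι κ M : Type*} [DecidableEq κ]
    [AddCommMonoid M] [PartialOrder M] [IsOrderedAddMonoid M]
    {s : Finset ι} {t : Finset κ} {f : ι → κ} {w : ι → M} {w' : κ → M} {n : ℕ}
    (hf : ∀ i ∈ s, f i ∈ t) (hw_le : ∀ i ∈ s, w i ≤ w' (f i))
    (hw' : ∀ j ∈ t, 0 ≤ w' j)
    (hcard : ∀ j ∈ t, #{i ∈ s | f i = j} ≤ n) :
    ∑ i ∈ s, w i ≤ n • ∑ j ∈ t, w' j :=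
  calc ∑ i ∈ s, w i = ∑ j ∈ t, ∑ i ∈ s with f i = j, w i :=
        (sum_fiberwise_of_maps_to hf _).symm
    _ ≤ ∑ j ∈ t, #{i ∈ s | f i = j} • w' j := sum_le_sum fun _ _ =>
        (sum_le_sum fun i hi => (mem_filter.1 hi).2 ▸ hw_le i (mem_filter.1 hi).1).trans_eq
          (sum_const _)
    _ ≤ ∑ j ∈ t, n • w' j :=
        sum_le_sum fun j hj => nsmul_le_nsmul_left (hw' j hj) (hcard j hj)
    _ = n • ∑ j ∈ t, w' j := (smul_sum ..).symm

namespace SimpleGraph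

variable {V : Type*} (G : SimpleGraph V)

theorem exists_charging_map {α : Type*} [Preorder α] {w : V → α} {J : Finset V}
    (hcharge : ∀ v, v ∉ J → ∃ v' ∈ J, G.Adj v v' ∧ w v ≤ w v') :
    ∃ f : V → V, ∀ v, f v ∈ J ∧ w v ≤ w (f v) ∧ (f v = v ∨ G.Adj v (f v)) := by
  classical
  choose! c hcJ hcadj hcw using hcharge
  refine ⟨fun v => if v ∈ J then v else c v, fun v => ?_⟩
  by_cases hv : v ∈ J
  · simp only [hv, if_true, le_refl, true_or, and_self]
  · simp only [hv, if_false]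
    exact ⟨hcJ v hv, hcw v hv, .inr (hcadj v hv)⟩

theorem card_filter_eq_le_of_charging [DecidableEq V] {I : Finset V}
    (hI : ∀ u ∈ I, ∀ v ∈ I, ¬ G.Adj u v) {f : V → V}
    (hf : ∀ v ∈ I, f v = v ∨ G.Adj v (f v))
    {v' : V} {τ : ℕ} (hτ : 1 ≤ τ)
    (hclaw : ∀ S : Finset V, (∀ u ∈ S, G.Adj v' u) →
      (∀ u ∈ S, ∀ u' ∈ S, u ≠ u' → ¬ G.Adj u u') → #S ≤ τ) :
    #{u ∈ I | f u = v'} ≤ τ := by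
  by_cases hv' : v' ∈ I
  · -- a vertex of `I` other than `v'` cannot be charged to `v'`: it would be adjacent to it
    have hsub : {u ∈ I | f u = v'} ⊆ {v'} := fun u hu => by
      obtain ⟨huI, rfl⟩ := mem_filter.1 hu
      rw [mem_singleton]
      exact (hf u huI).resolve_right (hI u huI _ hv') |>.symm
    exact (card_le_card hsub).trans (card_singleton v' ▸ hτ)
  · refine hclaw _ (fun u hu => ?_) fun u hu u' hu' _ =>
      hI u (mem_filter.1 hu).1 u' (mem_filter.1 hu').1
    obtain ⟨huI, rfl⟩ := mem_filter.1 hu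
    exact ((hf u huI).resolve_left fun h => hv' (by rwa [h])).symm

end SimpleGraph

theorem maximal_independent_set_charging_bound_general {V : Type*} [DecidableEq V]
    (G : SimpleGraph V) (w : V → ℝ) (hw : ∀ v, 0 ≤ w v)
    (τ : ℕ) (hτ : 1 ≤ τ)
    (IALG : Finset V)
    (hcharge : ∀ v : V, v ∉ IALG → ∃ v' ∈ IALG, G.Adj v v' ∧ w v ≤ w v')
    (hclaw : ∀ v ∈ IALG, ∀ S : Finset V,
      (∀ u ∈ S, G.Adj v u) →
      (∀ u ∈ S, ∀ u' ∈ S, u ≠ u' → ¬ G.Adj u u') →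
      S.card ≤ τ) :
    ∀ I : Finset V, (∀ u ∈ I, ∀ v ∈ I, ¬ G.Adj u v) →
      ∑ v ∈ I, w v ≤ (τ : ℝ) * ∑ v ∈ IALG, w v := by
  intro I hI
  obtain ⟨f, hf⟩ := G.exists_charging_map hcharge
  rw [← nsmul_eq_mul]
  exact sum_le_nsmul_sum_of_card_fiber_le (fun v _ => (hf v).1) (fun v _ => (hf v).2.1)
    (fun v _ => hw v) fun v' hv' =>
      G.card_filter_eq_le_of_charging hI (fun v _ => (hf v).2.2) hτ (hclaw v' hv')

theorem maximal_independent_set_charging_bound {V : Type*} [Fintype V] [DecidableEq V]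
    (G : SimpleGraph V) (w : V → ℝ) (hw : ∀ v, 0 ≤ w v)
    (τ : ℕ) (hτ : 1 ≤ τ)
    (IALG : Finset V)
    (hind : ∀ u ∈ IALG, ∀ v ∈ IALG, ¬ G.Adj u v)
    (hmax : ∀ v : V, v ∉ IALG → ∃ v' ∈ IALG, G.Adj v v')
    (hcharge : ∀ v : V, v ∉ IALG → ∃ v' ∈ IALG, G.Adj v v' ∧ w v ≤ w v')
    (hclaw : ∀ v ∈ IALG, ∀ S : Finset V,
      (∀ u ∈ S, G.Adj v u) →
      (∀ u ∈ S, ∀ u' ∈ S, u ≠ u' → ¬ G.Adj u u') →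
      S.card ≤ τ) :
    ∀ I : Finset V, (∀ u ∈ I, ∀ v ∈ I, ¬ G.Adj u v) →
      ∑ v ∈ I, w v ≤ (τ : ℝ) * ∑ v ∈ IALG, w v :=
  maximal_independent_set_charging_bound_general G w hw τ hτ IALG hcharge hclaw
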